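/- arXiv:1703.05968 — 3 statements merged into one kernel-verified Lean document; each statement's English description precedes it below -/
import Mathlib

section
/- Let k be a field and C a small k-linear category, and let Kar(C) be the Karoubi envelope of C (objects are pairs (x,e) with e : x → x an idempotent endomorphism; morphisms (x,e) → (y,e′) are morphisms f : x → y in C with f = e′∘f∘e). The k-linear map Tr ι : Tr C → Tr Kar(C) induced by the canonical embedding functor ι : C → Kar(C), x ↦ (x, 1_x), is bijective. -/
/-! The inverse of `Tr ι` sends `[f]`, for `f : (x, e) ⟶ (x, e)`, to the class of `f` in
`End x`. In `Kar(C)` the identity of `(x, e)` factors as `i ≫ p` through `(x, 1)` with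
`i, p` both given by `e`, so `[f] = [(f ≫ i) ≫ p] = [p ≫ f ≫ i] = [ι f]`. -/

open CategoryTheory CategoryTheory.Limits CategoryTheory.Idempotents

attribute [local instance] Classical.propDecidable

noncomputable section

variable (k : Type) [Field k]

section KaroubiLinear

variable {C : Type} [SmallCategory C] [Preadditive C] [CategoryTheory.Linear k C]

instance karoubiHomSMul (P Q : Karoubi C) : SMul k (P ⟶ Q) where
  smul c f := ⟨c • f.f, by
    rw [CategoryTheory.Linear.smul_comp, CategoryTheory.Linear.comp_smul, ← f.comm]
    simp⟩

@[simp] lemma karoubi_smul_f (P Q : Karoubi C) (c : k) (f : P ⟶ Q) :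
    (c • f).f = c • f.f := rfl

instance karoubiHomModule (P Q : Karoubi C) : Module k (P ⟶ Q) :=
  Function.Injective.module k
    { toFun := fun (f : P ⟶ Q) => f.f
      map_zero' := rfl
      map_add' := fun _ _ => rfl }
    (fun f g h => Karoubi.hom_ext _ _ h) (fun _ _ => rfl)

instance karoubiLinear : CategoryTheory.Linear k (Karoubi C) where
  homModule P Q := karoubiHomModule k P Q
  smul_comp P Q R c f g := by
    apply Karoubi.hom_ext
    simp [Karoubi.comp_f, CategoryTheory.Linear.smul_comp]
  comp_smul P Q R f c g := by
    apply Karoubi.hom_ext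
    simp [Karoubi.comp_f, CategoryTheory.Linear.comp_smul]

end KaroubiLinear

open scoped DirectSum

/-- The subspace of `⊕_{x} End(x)` spanned by the commutators `f ∘ g − g ∘ f`. -/
def traceRel (C : Type) [SmallCategory C] [Preadditive C] [CategoryTheory.Linear k C] :
    Submodule k (⨁ x : C, (x ⟶ x)) :=
  Submodule.span k
    {u | ∃ (x y : C) (f : x ⟶ y) (g : y ⟶ x),
      u = DirectSum.of (fun z : C => z ⟶ z) x (f ≫ g) -
            DirectSum.of (fun z : C => z ⟶ z) y (g ≫ f)}

/-- The trace of a `k`-linear category: `Tr C = (⊕_{x} End(x)) / span_k{f∘g − g∘f}`. -/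
abbrev Tr (C : Type) [SmallCategory C] [Preadditive C] [CategoryTheory.Linear k C] :=
  (⨁ x : C, (x ⟶ x)) ⧸ traceRel k C

/-- The trace class `[f] ∈ Tr C` of an endomorphism `f : x ⟶ x`. -/
def traceClass {C : Type} [SmallCategory C] [Preadditive C] [CategoryTheory.Linear k C]
    {x : C} (f : x ⟶ x) : Tr k C :=
  Submodule.Quotient.mk (DirectSum.of (fun z : C => z ⟶ z) x f)

section TraceUniversalProperty

variable {D : Type} [SmallCategory D] [Preadditive D] [CategoryTheory.Linear k D]

lemma traceClass_comp_comm {x y : D} (f : x ⟶ y) (g : y ⟶ x) :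
    traceClass k (f ≫ g) = traceClass k (g ≫ f) :=
  (Submodule.Quotient.eq _).mpr (Submodule.subset_span ⟨x, y, f, g, rfl⟩)

def traceClassₗ (x : D) : (x ⟶ x) →ₗ[k] Tr k D :=
  (traceRel k D).mkQ ∘ₗ DirectSum.lof k D (fun z : D => z ⟶ z) x

@[simp] lemma traceClassₗ_apply (x : D) (f : x ⟶ x) :
    traceClassₗ k x f = traceClass k f := rfl

variable {M : Type} [AddCommGroup M] [Module k M]

def traceLift (φ : ∀ x : D, (x ⟶ x) →ₗ[k] M)
    (hφ : ∀ (x y : D) (f : x ⟶ y) (g : y ⟶ x), φ x (f ≫ g) = φ y (g ≫ f)) :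
    Tr k D →ₗ[k] M :=
  (traceRel k D).liftQ (DirectSum.toModule k D M φ) <| by
    rw [traceRel, Submodule.span_le]
    rintro u ⟨x, y, f, g, rfl⟩
    rw [SetLike.mem_coe, LinearMap.mem_ker, map_sub, ← DirectSum.lof_eq_of k,
      ← DirectSum.lof_eq_of k, DirectSum.toModule_lof, DirectSum.toModule_lof, hφ, sub_self]

@[simp] lemma traceLift_traceClass (φ : ∀ x : D, (x ⟶ x) →ₗ[k] M)
    (hφ : ∀ (x y : D) (f : x ⟶ y) (g : y ⟶ x), φ x (f ≫ g) = φ y (g ≫ f))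
    {x : D} (f : x ⟶ x) : traceLift k φ hφ (traceClass k f) = φ x f := by
  rw [← traceClassₗ_apply]
  exact DirectSum.toModule_lof (N := M) (φ := φ) k x f

lemma trace_hom_ext {F G : Tr k D →ₗ[k] M}
    (h : ∀ (x : D) (f : x ⟶ x), F (traceClass k f) = G (traceClass k f)) : F = G :=
  Submodule.linearMap_qext _ <| DirectSum.linearMap_ext k fun x => LinearMap.ext (h x)

end TraceUniversalProperty

section TraceMap

variable {D E : Type} [SmallCategory D] [Preadditive D] [CategoryTheory.Linear k D]
  [SmallCategory E] [Preadditive E] [CategoryTheory.Linear k E]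

def traceMap (F : D ⥤ E) [F.Additive] [F.Linear k] : Tr k D →ₗ[k] Tr k E :=
  traceLift k (fun x => traceClassₗ k (F.obj x) ∘ₗ F.mapLinearMap k) fun x y f g => by
    simp [traceClass_comp_comm]

@[simp] lemma traceMap_traceClass (F : D ⥤ E) [F.Additive] [F.Linear k] {x : D} (f : x ⟶ x) :
    traceMap k F (traceClass k f) = traceClass k (F.map f) := by
  simp [traceMap]

end TraceMap

section Karoubi

variable {C : Type} [SmallCategory C] [Preadditive C] [CategoryTheory.Linear k C]

instance toKaroubi_linear : (toKaroubi C).Linear k where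
  map_smul _ _ := Karoubi.hom_ext _ _ rfl

/-- `[f] ↦ [f.f]`; this is not induced by a functor, since `𝟙 P` is sent to `P.p`. -/
def traceKaroubiForget : Tr k (Karoubi C) →ₗ[k] Tr k C :=
  traceLift k
    (fun P => traceClassₗ k P.X ∘ₗ
      { toFun := fun f : P ⟶ P => f.f
        map_add' := fun _ _ => rfl
        map_smul' := fun _ _ => rfl })
    fun P Q f g => by simp [traceClass_comp_comm]

@[simp] lemma traceKaroubiForget_traceClass {P : Karoubi C} (f : P ⟶ P) :
    traceKaroubiForget k (traceClass k f) = traceClass k f.f :=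
  traceLift_traceClass k _ _ f

lemma traceClass_karoubi (P : Karoubi C) (f : P ⟶ P) :
    traceClass k f = traceClass k ((toKaroubi C).map f.f) := calc
  traceClass k f = traceClass k ((f ≫ P.decompId_i) ≫ P.decompId_p) := by
    rw [Category.assoc, ← Karoubi.decompId, Category.comp_id]
  _ = traceClass k (P.decompId_p ≫ f ≫ P.decompId_i) := traceClass_comp_comm k _ _
  _ = traceClass k ((toKaroubi C).map f.f) := by
    congr 1
    ext
    simp

def traceToKaroubiEquiv : Tr k C ≃ₗ[k] Tr k (Karoubi C) :=
  LinearEquiv.ofLinearMap (traceMap k (toKaroubi C)) (traceKaroubiForget k)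
    (trace_hom_ext k fun P f => by simp [traceClass_karoubi k P f])
    (trace_hom_ext k fun x f => by simp)

end Karoubi

/-- The `k`-linear map `Tr ι : Tr C → Tr Kar(C)` induced by the canonical embedding
`ι : C ⥤ Kar(C)` (i.e. the unique linear map with `[f] ↦ [ι.map f]`) is bijective. -/
theorem trace_toKaroubi_bijective (C : Type) [SmallCategory C] [Preadditive C]
    [CategoryTheory.Linear k C] :
    ∃ T : Tr k C →ₗ[k] Tr k (Karoubi C),
      (∀ (x : C) (f : x ⟶ x), T (traceClass k f) = traceClass k ((toKaroubi C).map f)) ∧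
        Function.Bijective T :=
  ⟨(traceToKaroubiEquiv k (C := C)).toLinearMap,
    fun _ f => traceMap_traceClass k (toKaroubi C) f, (traceToKaroubiEquiv k).bijective⟩

end
end

section
/- Let λ_0 = (N, 0, …, 0). For every n-composition ν of N, the ideal I^{λ_0}_ν of P_ν (generated by the complete homogeneous symmetric polynomials h_r(Ω_{i_1} ∪ … ∪ Ω_{i_m}) for all 1 ≤ m ≤ n, all 1 ≤ i_1 < … < i_m ≤ n and all r > N − (ν_{i_1} + … + ν_{i_m})) equals the ideal of P_ν generated by the complete homogeneous symmetric polynomials h_r(X_1, …, X_N) in all N variables for all r > 0; equivalently, it equals the ideal of P_ν generated by all symmetric polynomials in X_1, …, X_N with zero constant term. -/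
open MvPolynomial Finset

noncomputable section

/-- The elementary symmetric polynomial of degree `l` in the variables indexed by `S`. -/
def esymIn {σ : Type*} [DecidableEq σ] (S : Finset σ) (l : ℕ) : MvPolynomial σ ℂ :=
  ∑ T ∈ S.powersetCard l, ∏ a ∈ T, X a

/-- The complete homogeneous symmetric polynomial of degree `m` in the variables indexed
by `S`. -/
def hsymIn {σ : Type*} [DecidableEq σ] (S : Finset σ) (m : ℕ) : MvPolynomial σ ℂ :=
  ∑ t ∈ S.sym m, (t.1.map X).prod

/-- Complete homogeneous symmetric polynomial with integer degree; zero in negative degree. -/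
def hsymZ {σ : Type*} [DecidableEq σ] (S : Finset σ) (d : ℤ) : MvPolynomial σ ℂ :=
  if 0 ≤ d then hsymIn S d.toNat else 0

/-- The power sum symmetric polynomial of degree `j` in the variables indexed by `S`. -/
def psymIn {σ : Type*} (S : Finset σ) (j : ℕ) : MvPolynomial σ ℂ :=
  ∑ a ∈ S, X a ^ j

variable (n N : ℕ)

/-- The partial sum `ν_0 + ⋯ + ν_{t−1}` of a composition `ν`. -/
def kpart (ν : Fin n → ℕ) (t : ℕ) : ℕ :=
  ∑ j ∈ Finset.univ.filter fun j : Fin n => (j : ℕ) < t, ν j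

/-- The `i`-th block of variables `Ω_i = {a | k_{i−1} ≤ a < k_i}` (0-based). -/
def blockOf (ν : Fin n → ℕ) (i : Fin n) : Finset (Fin N) :=
  Finset.univ.filter fun a : Fin N =>
    kpart n ν (i : ℕ) ≤ (a : ℕ) ∧ (a : ℕ) < kpart n ν ((i : ℕ) + 1)

/-- A permutation of the variables preserving each block of `ν`. -/
def BlockPreserving (ν : Fin n → ℕ) (σp : Equiv.Perm (Fin N)) : Prop :=
  ∀ i : Fin n, ∀ a ∈ blockOf n N ν i, σp a ∈ blockOf n N ν i

/-- `P_ν`: the subalgebra of polynomials invariant under the Young subgroup `S_ν`. -/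
def Psub (ν : Fin n → ℕ) : Subalgebra ℂ (MvPolynomial (Fin N) ℂ) where
  carrier := {p | ∀ σp : Equiv.Perm (Fin N), BlockPreserving n N ν σp → rename σp p = p}
  mul_mem' := fun hp hq σp hσ => by rw [map_mul, hp σp hσ, hq σp hσ]
  add_mem' := fun hp hq σp hσ => by rw [map_add, hp σp hσ, hq σp hσ]
  one_mem' := fun σp hσ => by simp
  zero_mem' := fun σp hσ => by simp
  algebraMap_mem' := fun c σp hσ => by simp [MvPolynomial.algebraMap_eq]

/-- The composition `ν − α_i` (for `i' = i+1`). -/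
def subAlpha (ν : Fin n → ℕ) (i i' : Fin n) : Fin n → ℕ :=
  Function.update (Function.update ν i (ν i - 1)) i' (ν i' + 1)

/-- The composition `ν + α_i` (for `i' = i+1`). -/
def addAlpha (ν : Fin n → ℕ) (i i' : Fin n) : Fin n → ℕ :=
  Function.update (Function.update ν i (ν i + 1)) i' (ν i' - 1)

/-- The variable `X_{k_i}` (the last variable of the `i`-th block), 0-based. -/
def varF [NeZero N] (ν : Fin n → ℕ) (i : Fin n) : Fin N :=
  Fin.ofNat N (kpart n ν ((i : ℕ) + 1) - 1 : ℕ)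

/-- The variable `X_{k_i + 1}` (the first variable of the `(i+1)`-st block), 0-based. -/
def varE [NeZero N] (ν : Fin n → ℕ) (i : Fin n) : Fin N :=
  Fin.ofNat N (kpart n ν ((i : ℕ) + 1) : ℕ)

/-- The value of `F_{i,j}` on the basis element `X_{k_i}^m`:
`Σ_{l=0}^{ν_i−1} (−1)^l e_l(ν−α_i;i) h_{m+j+ν_i−ν_{i+1}−1−l}(ν−α_i;i+1)`. -/
def Fval (ν : Fin n → ℕ) (i i' : Fin n) (j m : ℕ) : MvPolynomial (Fin N) ℂ :=
  ∑ l ∈ Finset.range (ν i),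
    (-1 : MvPolynomial (Fin N) ℂ) ^ l * esymIn (blockOf n N (subAlpha n ν i i') i) l *
      hsymZ (blockOf n N (subAlpha n ν i i') i')
        ((m : ℤ) + (j : ℤ) + (ν i : ℤ) - (ν i' : ℤ) - 1 - (l : ℤ))

/-- The value of `E_{i,j}` on the basis element `X_{k_i+1}^m`:
`Σ_{l=0}^{ν_{i+1}−1} (−1)^l e_l(ν+α_i;i+1) h_{m+j+ν_{i+1}−ν_i−1−l}(ν+α_i;i)`. -/
def Eval (ν : Fin n → ℕ) (i i' : Fin n) (j m : ℕ) : MvPolynomial (Fin N) ℂ :=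
  ∑ l ∈ Finset.range (ν i'),
    (-1 : MvPolynomial (Fin N) ℂ) ^ l * esymIn (blockOf n N (addAlpha n ν i i') i') l *
      hsymZ (blockOf n N (addAlpha n ν i i') i)
        ((m : ℤ) + (j : ℤ) + (ν i' : ℤ) - (ν i : ℤ) - 1 - (l : ℤ))

/-- `F` is (the restriction to `P_ν` of) the unique `P_{ν−α_i}`-linear map on
`P_{ν−α_i,ν}` sending the basis element `X_{k_i}^m` (`0 ≤ m ≤ ν_{i+1}`) to
`Σ_{l=0}^{ν_i−1} (−1)^l e_l(ν−α_i;i) h_{m+j+ν_i−ν_{i+1}−1−l}(ν−α_i;i+1)`;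
when `ν_i = 0` the target is the zero ring and `F` is the zero map. -/
def FSpec [NeZero N] (ν : Fin n → ℕ) (i i' : Fin n) (j : ℕ)
    (F : MvPolynomial (Fin N) ℂ → MvPolynomial (Fin N) ℂ) : Prop :=
  F 0 = 0 ∧
    (ν i = 0 → ∀ p ∈ Psub n N ν, F p = 0) ∧
    (0 < ν i → ∀ (p : MvPolynomial (Fin N) ℂ) (c : ℕ → MvPolynomial (Fin N) ℂ),
      p ∈ Psub n N ν → (∀ m, c m ∈ Psub n N (subAlpha n ν i i')) →
      p = ∑ m ∈ Finset.range (ν i' + 1), c m * X (varF n N ν i) ^ m →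
      F p = ∑ m ∈ Finset.range (ν i' + 1), c m * Fval n N ν i i' j m)

/-- `E` is (the restriction to `P_ν` of) the unique `P_{ν+α_i}`-linear map on
`P_{ν+α_i,ν}` sending the basis element `X_{k_i+1}^m` (`0 ≤ m ≤ ν_{i+1}−1`) to
`Σ_{l=0}^{ν_{i+1}−1} (−1)^l e_l(ν+α_i;i+1) h_{m+j+ν_{i+1}−ν_i−1−l}(ν+α_i;i)`;
when `ν_{i+1} = 0` the target is the zero ring and `E` is the zero map. -/
def ESpec [NeZero N] (ν : Fin n → ℕ) (i i' : Fin n) (j : ℕ)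
    (E : MvPolynomial (Fin N) ℂ → MvPolynomial (Fin N) ℂ) : Prop :=
  E 0 = 0 ∧
    (ν i' = 0 → ∀ p ∈ Psub n N ν, E p = 0) ∧
    (0 < ν i' → ∀ (p : MvPolynomial (Fin N) ℂ) (c : ℕ → MvPolynomial (Fin N) ℂ),
      p ∈ Psub n N ν → (∀ m, c m ∈ Psub n N (addAlpha n ν i i')) →
      p = ∑ m ∈ Finset.range (ν i'), c m * X (varE n N ν i) ^ m →
      E p = ∑ m ∈ Finset.range (ν i'), c m * Eval n N ν i i' j m)

/-- A family `(ν, i, j) ↦ F_{i,j} : P_ν → P_{ν−α_i}` of operators, each satisfying its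
defining specification (at every `n`-composition of `N`). -/
def FFam [NeZero N]
    (Ff : (Fin n → ℕ) → Fin n → ℕ → MvPolynomial (Fin N) ℂ → MvPolynomial (Fin N) ℂ) : Prop :=
  ∀ (ν : Fin n → ℕ) (i : Fin n) (hi : (i : ℕ) + 1 < n) (j : ℕ),
    Ff ν i j 0 = 0 ∧ ((∑ a, ν a) = N → FSpec n N ν i ⟨(i : ℕ) + 1, hi⟩ j (Ff ν i j))

/-- A family `(ν, i, j) ↦ E_{i,j} : P_ν → P_{ν+α_i}` of operators, each satisfying its
defining specification (at every `n`-composition of `N`). -/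
def EFam [NeZero N]
    (Ef : (Fin n → ℕ) → Fin n → ℕ → MvPolynomial (Fin N) ℂ → MvPolynomial (Fin N) ℂ) : Prop :=
  ∀ (ν : Fin n → ℕ) (i : Fin n) (hi : (i : ℕ) + 1 < n) (j : ℕ),
    Ef ν i j 0 = 0 ∧ ((∑ a, ν a) = N → ESpec n N ν i ⟨(i : ℕ) + 1, hi⟩ j (Ef ν i j))


/-- The generators `h_r(Ω_{i_1} ∪ … ∪ Ω_{i_m})`, for `1 ≤ i_1 < … < i_m ≤ n` and
`r > λ_1 + … + λ_m − ν_{i_1} − … − ν_{i_m}`, of the ideal `I^λ_ν ⊆ P_ν`. -/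
def Igen (lam ν : Fin n → ℕ) : Set (MvPolynomial (Fin N) ℂ) :=
  {q | ∃ (T : Finset (Fin n)) (r : ℕ), T.Nonempty ∧
    (∑ k ∈ Finset.univ.filter fun k : Fin n => (k : ℕ) < T.card, lam k) < r + ∑ a ∈ T, ν a ∧
    q = hsymIn (T.biUnion fun a => blockOf n N ν a) r}

/-- The ideal `I^λ_ν` of `P_ν`, realized as the `P_ν`-submodule of the ambient polynomial
ring spanned by its generators. -/
def Ilam (lam ν : Fin n → ℕ) : Submodule (Psub n N ν) (MvPolynomial (Fin N) ℂ) :=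
  Submodule.span (Psub n N ν) (Igen n N lam ν)


/-! For `λ_0` the generators of `I^{λ_0}_ν` are the `h_r(Ω_T)` with
`r > N - |Ω_T| = |Ω_Tᶜ|`. The identity `H_A(t) = E_B(-t) H_{A ∪ B}(t)` for disjoint `A`, `B`
gives `h_r(Ω_T) = Σ_j (-1)^j e_j(Ω_Tᶜ) h_{r-j}(X_1, …, X_N)`; here `e_j(Ω_Tᶜ) ∈ P_ν` vanishes
for `j > |Ω_Tᶜ|`, so only `h_{r-j}` with `r - j > 0` occur. Conversely `h_r(X_1, …, X_N)` is
the generator for `T` the set of all blocks. The same identity with `A = ∅` expresses each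
`e_k`, `k > 0`, through the `h_r`, and by the fundamental theorem of symmetric polynomials a
symmetric polynomial without constant term is a combination of the `e_k` with symmetric
coefficients. -/

section SymmetricPolynomials

variable {σ τ : Type*} [DecidableEq σ]

@[simp] lemma hsymIn_zero (S : Finset σ) : hsymIn S 0 = 1 := by
  simp [hsymIn, Finset.sym_zero, Sym.eq_nil_of_card_zero, Sym.coe_nil]

@[simp] lemma esymIn_zero (S : Finset σ) : esymIn S 0 = 1 := by
  simp [esymIn]

lemma esymIn_eq_zero_of_card_lt {S : Finset σ} {l : ℕ} (h : S.card < l) : esymIn S l = 0 := by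
  simp [esymIn, Finset.powersetCard_eq_empty.2 h]

@[simp] lemma esymIn_empty_succ (l : ℕ) : esymIn (∅ : Finset σ) (l + 1) = 0 :=
  esymIn_eq_zero_of_card_lt (by simp)

@[simp] lemma hsymIn_empty_succ (r : ℕ) : hsymIn (∅ : Finset σ) (r + 1) = 0 := by
  simp [hsymIn]

lemma constantCoeff_hsymIn (S : Finset σ) {r : ℕ} (hr : 0 < r) :
    constantCoeff (hsymIn S r) = 0 := by
  simp [hsymIn, map_sum, map_multiset_prod, hr.ne']

lemma esymIn_insert_succ {x : σ} {B : Finset σ} (hx : x ∉ B) (l : ℕ) :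
    esymIn (insert x B) (l + 1) = esymIn B (l + 1) + X x * esymIn B l := by
  simp only [esymIn, ← Finset.esymm_map_val, Finset.insert_val_of_notMem hx, Multiset.map_cons,
    Multiset.esymm, Multiset.powersetCard_cons, Multiset.map_add, Multiset.sum_add,
    Multiset.map_map, Function.comp_def, Multiset.prod_cons, Multiset.sum_map_mul_left]

lemma hsymIn_insert {x : σ} {A : Finset σ} (hx : x ∉ A) (r : ℕ) :
    hsymIn (insert x A) r = ∑ p ∈ antidiagonal r, X x ^ p.1 * hsymIn A p.2 := by
  rw [hsymIn, ← Finset.sum_coe_sort, ← (Finset.symInsertEquiv hx).symm.sum_comp,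
    Fintype.sum_sigma, Finset.Nat.sum_antidiagonal_eq_sum_range_succ_mk,
    ← Fin.sum_univ_eq_sum_range]
  congr! 1 with i
  rw [hsymIn, Finset.mul_sum, ← Finset.sum_coe_sort (A.sym _)]
  simp [Sym.coe_fill, mul_comm, Sym.replicate, Multiset.map_replicate]

lemma hsymIn_insert_succ {x : σ} {A : Finset σ} (hx : x ∉ A) (r : ℕ) :
    hsymIn (insert x A) (r + 1) = hsymIn A (r + 1) + X x * hsymIn (insert x A) r := by
  rw [hsymIn_insert hx, hsymIn_insert hx, Finset.Nat.sum_antidiagonal_succ, Finset.mul_sum]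
  simp [pow_succ', mul_assoc]

theorem hsymIn_eq_sum_antidiagonal {A B : Finset σ} (hAB : Disjoint A B) (r : ℕ) :
    hsymIn A r = ∑ p ∈ antidiagonal r, (-1) ^ p.1 * esymIn B p.1 * hsymIn (A ∪ B) p.2 := by
  induction B using Finset.induction_on generalizing A r with
  | empty => cases r <;> simp [Finset.Nat.sum_antidiagonal_succ]
  | @insert x B hxB ih =>
    have hxA : x ∉ A := fun h => Finset.disjoint_left.1 hAB h (Finset.mem_insert_self x B)
    have hAB' : Disjoint (insert x A) B :=
      Finset.disjoint_insert_left.2 ⟨hxB, (Finset.disjoint_insert_right.1 hAB).2⟩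
    rw [Finset.union_insert, ← Finset.insert_union]
    rcases r with _ | r
    · simp
    have hsucc := ih hAB' (r + 1)
    have hpred := ih hAB' r
    rw [Finset.Nat.sum_antidiagonal_succ] at hsucc ⊢
    have hshift : ∑ p ∈ antidiagonal r,
        (-1) ^ (p.1 + 1) * (X x * esymIn B p.1) * hsymIn (insert x A ∪ B) p.2 =
          -(X x * hsymIn (insert x A) r) := by
      rw [hpred, Finset.mul_sum, ← Finset.sum_neg_distrib]
      exact Finset.sum_congr rfl fun _ _ => by ring
    simp only [esymIn_insert_succ hxB, esymIn_zero, mul_add, add_mul, Finset.sum_add_distrib,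
      hshift] at hsucc ⊢
    linear_combination hsucc - hsymIn_insert_succ hxA r

variable [DecidableEq τ]

lemma rename_esymIn (f : σ ↪ τ) (S : Finset σ) (l : ℕ) :
    rename f (esymIn S l) = esymIn (S.map f) l := by
  simp [esymIn, Finset.powersetCard_map, map_sum, map_prod, Finset.prod_map]

lemma rename_hsymIn (f : σ ↪ τ) (S : Finset σ) (r : ℕ) :
    rename f (hsymIn S r) = hsymIn (S.map f) r := by
  simp [hsymIn, Finset.sym_map, map_sum, map_multiset_prod, Multiset.map_map]

lemma rename_esymIn_of_mapsTo {e : Equiv.Perm σ} {S : Finset σ} (h : ∀ a ∈ S, e a ∈ S)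
    (l : ℕ) : rename e (esymIn S l) = esymIn S l := by
  rw [← Equiv.coe_toEmbedding, rename_esymIn, Finset.map_eq_of_subset]
  intro b hb
  obtain ⟨a, ha, rfl⟩ := Finset.mem_map.1 hb
  exact h a ha

lemma isSymmetric_hsymIn_univ [Fintype σ] (r : ℕ) :
    (hsymIn (univ : Finset σ) r).IsSymmetric := fun e => by
  rw [← Equiv.coe_toEmbedding, rename_hsymIn, Finset.map_univ_equiv]

end SymmetricPolynomials

lemma constantCoeff_esymm {σ R : Type*} [CommSemiring R] [Fintype σ] {k : ℕ} (hk : 0 < k) :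
    constantCoeff (esymm σ R k) = 0 := by
  simp only [esymm, map_sum, map_prod, constantCoeff_X, Finset.prod_const]
  exact Finset.sum_eq_zero fun t ht => by
    rw [(Finset.mem_powersetCard.1 ht).2, zero_pow hk.ne']

lemma Equiv.Perm.mapsTo_compl_of_mapsTo {α : Type*} [Fintype α] [DecidableEq α]
    {e : Equiv.Perm α} {S : Finset α} (h : ∀ a ∈ S, e a ∈ S) : ∀ a ∈ Sᶜ, e a ∈ Sᶜ := by
  have hS : S.map e.toEmbedding = S := Finset.map_eq_of_subset fun b hb => by
    obtain ⟨a, ha, rfl⟩ := Finset.mem_map.1 hb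
    exact h a ha
  intro a ha
  rw [Finset.mem_compl, ← hS]
  intro hea
  obtain ⟨b, hb, hba⟩ := Finset.mem_map.1 hea
  exact Finset.mem_compl.1 ha (e.injective hba ▸ hb)

lemma Submodule.mul_mem_of_mem_subalgebra {K R : Type*} [CommSemiring K] [CommSemiring R]
    [Algebra K R] {A : Subalgebra K R} (M : Submodule A R) {p x : R} (hp : p ∈ A)
    (hx : x ∈ M) : p * x ∈ M :=
  M.smul_mem ⟨p, hp⟩ hx

section SymmetricModules

variable {σ : Type*} [Fintype σ] {A : Subalgebra ℂ (MvPolynomial σ ℂ)}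
  (M : Submodule A (MvPolynomial σ ℂ))

lemma mem_of_isSymmetric_of_esymm_mem (hA : symmetricSubalgebra σ ℂ ≤ A)
    (hM : ∀ k, 0 < k → esymm σ ℂ k ∈ M) {q : MvPolynomial σ ℂ} (hq : q.IsSymmetric)
    (hq0 : constantCoeff q = 0) : q ∈ M := by
  obtain ⟨Φ, hΦ⟩ := esymmAlgHom_surjective ℂ le_rfl ⟨q, hq⟩
  suffices key : ∀ Φ, (esymmAlgHom σ ℂ (Fintype.card σ) Φ : MvPolynomial σ ℂ) -
      C (constantCoeff (esymmAlgHom σ ℂ (Fintype.card σ) Φ : MvPolynomial σ ℂ)) ∈ M by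
    simpa [hΦ, hq0] using key Φ
  intro Φ
  induction Φ using MvPolynomial.induction_on with
  | C a => simp [MvPolynomial.algebraMap_eq]
  | add p₁ p₂ h₁ h₂ => simpa [add_sub_add_comm] using M.add_mem h₁ h₂
  | mul_X p i _ =>
    have hX : (esymmAlgHom σ ℂ (Fintype.card σ) (X i) : MvPolynomial σ ℂ) =
        esymm σ ℂ (i + 1) := by
      simp [esymmAlgHom_apply]
    rw [map_mul, Subalgebra.coe_mul, hX, map_mul, constantCoeff_esymm i.val.succ_pos, mul_zero,
      C_0, sub_zero]
    exact M.mul_mem_of_mem_subalgebra (hA (esymmAlgHom σ ℂ _ p).2) (hM _ i.val.succ_pos)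

variable [DecidableEq σ]

lemma hsymIn_mem_of_card_compl_lt (hM : ∀ r, 0 < r → hsymIn (univ : Finset σ) r ∈ M)
    {S : Finset σ} (hS : ∀ l, esymIn Sᶜ l ∈ A) {r : ℕ} (hr : Sᶜ.card < r) :
    hsymIn S r ∈ M := by
  rw [hsymIn_eq_sum_antidiagonal disjoint_compl_right r, Finset.union_compl]
  refine M.sum_mem fun p hp => ?_
  rcases lt_or_ge Sᶜ.card p.1 with h | h
  · simp [esymIn_eq_zero_of_card_lt h]
  · have := mem_antidiagonal.1 hp
    exact M.mul_mem_of_mem_subalgebra (mul_mem (pow_mem (neg_mem (one_mem A)) _) (hS _))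
      (hM _ (by omega))

lemma esymm_mem_of_hsymIn_univ_mem (hA : symmetricSubalgebra σ ℂ ≤ A)
    (hM : ∀ r, 0 < r → hsymIn (univ : Finset σ) r ∈ M) {k : ℕ} (hk : 0 < k) :
    esymm σ ℂ k ∈ M := by
  obtain ⟨k, rfl⟩ := Nat.exists_eq_add_one_of_ne_zero hk.ne'
  have hzero :=
    hsymIn_eq_sum_antidiagonal (Finset.disjoint_empty_left (univ : Finset σ)) (k + 1)
  rw [hsymIn_empty_succ, Finset.empty_union, Finset.Nat.sum_antidiagonal_succ',
    hsymIn_zero, mul_one] at hzero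
  have hsum : ∑ p ∈ antidiagonal k,
      (-1) ^ p.1 * esymIn (univ : Finset σ) p.1 * hsymIn univ (p.2 + 1) ∈ M :=
    M.sum_mem fun p _ => M.mul_mem_of_mem_subalgebra
      (mul_mem (pow_mem (neg_mem (one_mem A)) _) (hA (esymm_isSymmetric σ ℂ p.1)))
      (hM _ p.2.succ_pos)
  have hsq : ((-1 : MvPolynomial σ ℂ) ^ (k + 1)) ^ 2 = 1 := by
    rw [← pow_mul, pow_mul', neg_one_sq, one_pow]
  change esymIn univ (k + 1) ∈ M
  rw [show esymIn univ (k + 1) = -((-1) ^ (k + 1) * ∑ p ∈ antidiagonal k,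
      (-1) ^ p.1 * esymIn (univ : Finset σ) p.1 * hsymIn univ (p.2 + 1)) by
    linear_combination -(-1 : MvPolynomial σ ℂ) ^ (k + 1) * hzero - esymIn univ (k + 1) * hsq]
  exact M.neg_mem (M.mul_mem_of_mem_subalgebra (pow_mem (neg_mem (one_mem A)) _) hsum)

lemma span_hsymIn_univ_eq_span_isSymmetric (hA : symmetricSubalgebra σ ℂ ≤ A) :
    Submodule.span A {q | ∃ r, 0 < r ∧ q = hsymIn (univ : Finset σ) r} =
      Submodule.span A {q | (∀ e : Equiv.Perm σ, rename e q = q) ∧ constantCoeff q = 0} := by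
  refine le_antisymm (Submodule.span_le.2 ?_) (Submodule.span_le.2 ?_)
  · rintro q ⟨r, hr, rfl⟩
    apply Submodule.subset_span
    exact ⟨isSymmetric_hsymIn_univ r, constantCoeff_hsymIn _ hr⟩
  · rintro q ⟨hq, hq0⟩
    refine mem_of_isSymmetric_of_esymm_mem _ hA (fun k hk => ?_) hq hq0
    exact esymm_mem_of_hsymIn_univ_mem _ hA
      (fun r hr => Submodule.subset_span (by exact ⟨r, hr, rfl⟩)) hk

end SymmetricModules

lemma Nat.exists_le_lt_succ_of_le_of_lt (f : ℕ → ℕ) {a m : ℕ} (h0 : f 0 ≤ a)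
    (hm : a < f m) : ∃ i < m, f i ≤ a ∧ a < f (i + 1) := by
  induction m with
  | zero => omega
  | succ m ih =>
    by_cases h : a < f m
    · obtain ⟨i, hi, hfi⟩ := ih h
      exact ⟨i, by omega, hfi⟩
    · exact ⟨m, by omega, by omega, hm⟩

section Blocks

variable {n N : ℕ} (ν : Fin n → ℕ)

lemma kpart_zero : kpart n ν 0 = 0 := by
  simp [kpart]

lemma kpart_of_le {t : ℕ} (ht : n ≤ t) : kpart n ν t = ∑ a, ν a := by
  simp [kpart, Finset.filter_true_of_mem fun (j : Fin n) _ => j.isLt.trans_le ht]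

lemma kpart_succ (i : Fin n) : kpart n ν (i + 1) = kpart n ν i + ν i := by
  have : univ.filter (fun j : Fin n => (j : ℕ) < i + 1) =
      insert i (univ.filter fun j : Fin n => (j : ℕ) < i) := by
    ext j
    simp only [mem_filter, mem_univ, true_and, mem_insert, Fin.ext_iff]
    omega
  rw [kpart, this, Finset.sum_insert (by simp), add_comm, kpart]

lemma card_blockOf_le (i : Fin n) : (blockOf n N ν i).card ≤ ν i :=
  calc (blockOf n N ν i).card
      ≤ (Ico (kpart n ν i) (kpart n ν (i + 1))).card :=
        Finset.card_le_card_of_injOn Fin.val (fun a ha => by simpa [blockOf] using ha)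
          Fin.val_injective.injOn
    _ = ν i := by simp [kpart_succ]

variable {ν}

lemma exists_mem_blockOf (hν : ∑ a, ν a = N) (a : Fin N) : ∃ i, a ∈ blockOf n N ν i := by
  obtain ⟨i, hi, hai⟩ := Nat.exists_le_lt_succ_of_le_of_lt (kpart n ν) (a := a) (m := n)
    (by simp [kpart_zero]) (by simp [kpart_of_le, hν])
  exact ⟨⟨i, hi⟩, by simpa [blockOf] using hai⟩

lemma biUnion_blockOf_univ (hν : ∑ a, ν a = N) : univ.biUnion (blockOf n N ν) = univ :=
  Finset.eq_univ_of_forall fun a => by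
    obtain ⟨i, hi⟩ := exists_mem_blockOf hν a
    exact Finset.mem_biUnion.2 ⟨i, Finset.mem_univ i, hi⟩

lemma card_compl_biUnion_blockOf_add_sum_le (hν : ∑ a, ν a = N) (T : Finset (Fin n)) :
    (T.biUnion (blockOf n N ν))ᶜ.card + ∑ a ∈ T, ν a ≤ N := by
  have hsub : (T.biUnion (blockOf n N ν))ᶜ ⊆ Tᶜ.biUnion (blockOf n N ν) := fun a ha => by
    obtain ⟨i, hi⟩ := exists_mem_blockOf hν a
    refine Finset.mem_biUnion.2 ⟨i, Finset.mem_compl.2 fun hiT => ?_, hi⟩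
    exact Finset.mem_compl.1 ha (Finset.mem_biUnion.2 ⟨i, hiT, hi⟩)
  have hcard := (Finset.card_le_card hsub).trans <| Finset.card_biUnion_le.trans <|
    Finset.sum_le_sum fun i _ => card_blockOf_le ν i
  have := Finset.sum_compl_add_sum T ν
  omega

lemma esymIn_compl_biUnion_blockOf_mem_Psub (T : Finset (Fin n)) (l : ℕ) :
    esymIn (T.biUnion (blockOf n N ν))ᶜ l ∈ Psub n N ν := fun σp hσp => by
  refine rename_esymIn_of_mapsTo (Equiv.Perm.mapsTo_compl_of_mapsTo fun a ha => ?_) l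
  obtain ⟨i, hiT, hai⟩ := Finset.mem_biUnion.1 ha
  exact Finset.mem_biUnion.2 ⟨i, hiT, hσp i a hai⟩

lemma symmetricSubalgebra_le_Psub : symmetricSubalgebra (Fin N) ℂ ≤ Psub n N ν :=
  fun _ hp σp _ => hp σp

end Blocks

section TopPartition

variable {n N : ℕ}

lemma partialSum_top_of_nonempty {T : Finset (Fin n)} (hT : T.Nonempty) :
    ∑ k ∈ univ.filter (fun k : Fin n => (k : ℕ) < T.card),
      (fun a : Fin n => if (a : ℕ) = 0 then N else 0) k = N := by
  obtain ⟨t, ht⟩ := hT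
  rw [Finset.sum_eq_single ⟨0, t.pos⟩ (fun k _ hk => if_neg fun h => hk (Fin.ext h))]
  · simp
  · simp [Finset.ne_empty_of_mem ht]

lemma Ilam_top_le_span_hsymIn_univ (ν : Fin n → ℕ) (hν : ∑ a, ν a = N) :
    Ilam n N (fun a => if (a : ℕ) = 0 then N else 0) ν ≤
      Submodule.span (Psub n N ν) {q | ∃ r, 0 < r ∧ q = hsymIn (univ : Finset (Fin N)) r} := by
  refine Submodule.span_le.2 ?_
  rintro q ⟨T, r, hT, hr, rfl⟩
  rw [partialSum_top_of_nonempty hT] at hr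
  have hcard := card_compl_biUnion_blockOf_add_sum_le hν T
  exact hsymIn_mem_of_card_compl_lt _
    (fun r hr => Submodule.subset_span (by exact ⟨r, hr, rfl⟩))
    (esymIn_compl_biUnion_blockOf_mem_Psub T) (by omega)

lemma span_hsymIn_univ_le_Ilam_top (hN : 1 ≤ N) (ν : Fin n → ℕ) (hν : ∑ a, ν a = N) :
    Submodule.span (Psub n N ν) {q | ∃ r, 0 < r ∧ q = hsymIn (univ : Finset (Fin N)) r} ≤
      Ilam n N (fun a => if (a : ℕ) = 0 then N else 0) ν := by
  refine Submodule.span_le.2 ?_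
  rintro q ⟨r, hr, rfl⟩
  have hn : 0 < n := Nat.pos_of_ne_zero fun h => by subst h; simp at hν; omega
  have huniv : (univ : Finset (Fin n)).Nonempty := ⟨⟨0, hn⟩, Finset.mem_univ _⟩
  refine Submodule.subset_span ⟨univ, r, huniv, ?_, by rw [biUnion_blockOf_univ hν]⟩
  rw [partialSum_top_of_nonempty huniv, hν]
  omega

end TopPartition

theorem Ilam_top_eq (hN : 1 ≤ N)
    (ν : Fin n → ℕ) (hν : (∑ a, ν a) = N) :
    Ilam n N (fun a => if (a : ℕ) = 0 then N else 0) ν =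
        Submodule.span (Psub n N ν)
          {q : MvPolynomial (Fin N) ℂ |
            ∃ r : ℕ, 0 < r ∧ q = hsymIn (Finset.univ : Finset (Fin N)) r} ∧
      Ilam n N (fun a => if (a : ℕ) = 0 then N else 0) ν =
        Submodule.span (Psub n N ν)
          {q : MvPolynomial (Fin N) ℂ |
            (∀ σp : Equiv.Perm (Fin N), rename σp q = q) ∧ constantCoeff q = 0} := by
  have h :=
    le_antisymm (Ilam_top_le_span_hsymIn_univ ν hν) (span_hsymIn_univ_le_Ilam_top hN ν hν)
  exact ⟨h, h.trans (span_hsymIn_univ_eq_span_isSymmetric symmetricSubalgebra_le_Psub)⟩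
end
end

section
/- Let α and β be partitions of N all of whose parts are at most n, and let m ≥ 0 be an integer. Let α″ (respectively β″) be the partition of N + nm obtained by prepending m parts equal to n to α (respectively β). Then K^{(m+N)}_{α,β}(t) = K^{(m+N)}_{α″,β″}(t), where on the left-hand side α and β are padded with zeros to length m+N. -/
open Finset

/-- The index type for the positive roots `ε_a − ε_b`, `a < b`, of `gl_M`. -/
abbrev RootIdx (M : ℕ) := {q : Fin M × Fin M // q.1 < q.2}

/-- The positive root `ε_a − ε_b` as an integer vector. -/
def root {M : ℕ} (q : RootIdx M) : Fin M → ℤ :=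
  fun x => (if x = q.1.1 then 1 else 0) - (if x = q.1.2 then 1 else 0)

/-- `c_k(ξ)`: the number of tuples `(m_α)` of non-negative integers indexed by the positive
roots with `Σ_α m_α · α = ξ` and `Σ_α m_α = k`. -/
noncomputable def rootCount (M : ℕ) (ξ : Fin M → ℤ) (k : ℕ) : ℕ :=
  Nat.card {f : RootIdx M → ℕ //
    (∑ q : RootIdx M, f q) = k ∧
      ∀ a : Fin M, (∑ q : RootIdx M, (f q : ℤ) * root q a) = ξ a}

/-- The generating function `P_M(ξ; t) = Σ_k c_k(ξ) t^k`. -/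
noncomputable def Pseries (M : ℕ) (ξ : Fin M → ℤ) : PowerSeries ℤ :=
  PowerSeries.mk fun k => (rootCount M ξ k : ℤ)

/-- `δ_M = (M−1, M−2, …, 1, 0)`. -/
def delta (M : ℕ) : Fin M → ℤ := fun a => (M : ℤ) - 1 - (a : ℕ)

/-- The Kostka–Foulkes polynomial at level `M`:
`K^{(M)}_{λ,μ}(t) = Σ_{σ ∈ S_M} sgn(σ)·P_M(σ(λ+δ_M) − (μ+δ_M); t)`. -/
noncomputable def KostkaFoulkes (M : ℕ) (lam mu : Fin M → ℕ) : PowerSeries ℤ :=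
  ∑ σ : Equiv.Perm (Fin M),
    ((Equiv.Perm.sign σ : ℤˣ) : ℤ) •
      Pseries M (fun a => ((lam (σ⁻¹ a) : ℤ) + delta M (σ⁻¹ a)) - ((mu a : ℤ) + delta M a))


/-- Prepending `m` parts equal to `n` to a partition of `N` with parts at most `n`
(everything padded with zeros to length `m + N`). -/
def prependParts (n N m : ℕ) (α : Fin (m + N) → ℕ) : Fin (m + N) → ℕ :=
  fun a => if h : (a : ℕ) < m then n else α ⟨(a : ℕ) - m, by have := a.isLt; omega⟩

/-!
If `ξ = Σ m_α α`, then `Σ_{a<c} ξ_a` is the total multiplicity of the roots `ε_a − ε_b` with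
`a < c ≤ b`. Hence `P_M(ξ) = 0` as soon as an initial sum of `ξ` is negative, and a vanishing
initial sum rules out these crossing roots.

`α + δ` is `≥ m` before position `N` and `< m` from there on, so the term of `K_{α,β}` indexed by a
`σ` that does not preserve the first `N` coordinates has a negative initial sum and vanishes. Its
conjugate by the rotation `ρ` moving the first `N` coordinates to the end does not preserve the
first `m` coordinates, where `α″ + δ` jumps across the level `n + N`, so the matching term of
`K_{α″,β″}` vanishes too. For the remaining `σ`, the argument of `P` for `(α″, β″, ρσρ⁻¹)` is the
one for `(α, β, σ)` moved by `ρ`; since no root with nonzero multiplicity crosses the block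
boundary, moving the multiplicities along `ρ` identifies the two generating functions.
-/

section RootSums

variable {M : ℕ}

def rootSum (f : RootIdx M → ℕ) (a : Fin M) : ℤ := ∑ q, (f q : ℤ) * root q a

lemma sum_root_filter_lt (q : RootIdx M) (c : ℕ) :
    ∑ a with a.1 < c, root q a = if q.1.1.1 < c ∧ c ≤ q.1.2.1 then 1 else 0 := by
  have hq : q.1.1.1 < q.1.2.1 := q.2
  simp only [root, sum_sub_distrib, sum_ite_eq', mem_filter, mem_univ, true_and]
  split_ifs <;> omega

lemma sum_rootSum_filter_lt (f : RootIdx M → ℕ) (c : ℕ) :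
    ∑ a with a.1 < c, rootSum f a = ∑ q with q.1.1.1 < c ∧ c ≤ q.1.2.1, (f q : ℤ) := by
  simp only [rootSum]
  rw [sum_comm, sum_filter]
  simp only [← mul_sum, sum_root_filter_lt, mul_ite, mul_one, mul_zero]

variable {ξ : Fin M → ℤ} {f : RootIdx M → ℕ}

lemma sum_filter_lt_nonneg (hf : ∀ a, rootSum f a = ξ a) (c : ℕ) : 0 ≤ ∑ a with a.1 < c, ξ a := by
  simp only [← hf, sum_rootSum_filter_lt]
  positivity

lemma eq_zero_of_crossing (hf : ∀ a, rootSum f a = ξ a) {c : ℕ}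
    (h : ∑ a with a.1 < c, ξ a = 0) {q : RootIdx M} (hq₁ : q.1.1.1 < c) (hq₂ : c ≤ q.1.2.1) :
    f q = 0 := by
  simp only [← hf, sum_rootSum_filter_lt] at h
  have := (sum_eq_zero_iff_of_nonneg fun _ _ => Nat.cast_nonneg _).1 h q (by simp [hq₁, hq₂])
  exact_mod_cast this

lemma sum_eq_zero_of_rootSum_eq (hf : ∀ a, rootSum f a = ξ a) : ∑ a, ξ a = 0 := by
  have h := sum_rootSum_filter_lt f M
  simp only [hf, Fin.is_lt, filter_true] at h
  rw [h, sum_eq_zero]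
  intro q hq
  exact absurd (mem_filter.1 hq).2.2 (not_le.2 q.1.2.is_lt)

lemma rootCount_eq_zero_of_sum_filter_lt_neg {c : ℕ} (h : ∑ a with a.1 < c, ξ a < 0) (k : ℕ) :
    rootCount M ξ k = 0 := by
  have : IsEmpty {f : RootIdx M → ℕ // (∑ q, f q) = k ∧ ∀ a, rootSum f a = ξ a} :=
    ⟨fun f => (sum_filter_lt_nonneg f.2.2 c).not_gt h⟩
  exact @Nat.card_of_isEmpty _ this

lemma Pseries_eq_zero_of_sum_filter_lt_neg {c : ℕ} (h : ∑ a with a.1 < c, ξ a < 0) :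
    Pseries M ξ = 0 := by
  ext k
  simp [Pseries, rootCount_eq_zero_of_sum_filter_lt_neg h]

end RootSums

section PermRoots

variable {M : ℕ} (π : Equiv.Perm (Fin M))

def permRoots (f : RootIdx M → ℕ) (p : RootIdx M) : ℕ :=
  if h : π.symm p.1.1 < π.symm p.1.2 then f ⟨(π.symm p.1.1, π.symm p.1.2), h⟩ else 0

variable {π} {f : RootIdx M → ℕ}

lemma sum_permRoots_mul {R : Type*} [CommSemiring R] (hf : ∀ q, f q ≠ 0 → π q.1.1 < π q.1.2)
    (H : Fin M → Fin M → R) :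
    ∑ p, (permRoots π f p : R) * H p.1.1 p.1.2 = ∑ q, (f q : R) * H (π q.1.1) (π q.1.2) := by
  symm
  refine sum_bij_ne_zero (fun q _ hq => ⟨(π q.1.1, π q.1.2), hf q ?_⟩) (by simp) ?_ ?_ ?_
  · exact fun h => hq (by simp [h])
  · intro q₁ _ _ q₂ _ _ h
    simp only [Subtype.mk.injEq, Prod.mk.injEq, EmbeddingLike.apply_eq_iff_eq] at h
    exact Subtype.ext (Prod.ext h.1 h.2)
  · intro p _ hp
    have hlt : π.symm p.1.1 < π.symm p.1.2 := by
      by_contra h; simp [permRoots, h] at hp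
    refine ⟨⟨(π.symm p.1.1, π.symm p.1.2), hlt⟩, mem_univ _, ?_, by simp⟩
    simpa [permRoots, hlt] using hp
  · intro q _ _
    simp [permRoots, q.2]

lemma sum_permRoots (hf : ∀ q, f q ≠ 0 → π q.1.1 < π q.1.2) :
    ∑ p, permRoots π f p = ∑ q, f q := by
  simpa using sum_permRoots_mul (R := ℕ) hf fun _ _ => 1

lemma rootSum_permRoots (hf : ∀ q, f q ≠ 0 → π q.1.1 < π q.1.2) (a : Fin M) :
    rootSum (permRoots π f) a = rootSum f (π.symm a) := by
  have := sum_permRoots_mul hf fun x y => (if a = x then (1 : ℤ) else 0) - if a = y then 1 else 0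
  simpa only [rootSum, root, ← Equiv.symm_apply_eq] using this

lemma permRoots_symm_permRoots (hf : ∀ q, f q ≠ 0 → π q.1.1 < π q.1.2) :
    permRoots π.symm (permRoots π f) = f := by
  funext q
  by_cases hq : π q.1.1 < π q.1.2
  · simp [permRoots, hq, q.2]
  · simp only [permRoots, Equiv.symm_symm, hq, dite_false]
    exact (by_contra fun h => hq (hf q h) : f q = 0).symm

lemma rootCount_comp_symm {ξ : Fin M → ℤ}
    (h₁ : ∀ f, (∀ a, rootSum f a = ξ a) → ∀ q, f q ≠ 0 → π q.1.1 < π q.1.2)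
    (h₂ : ∀ g, (∀ a, rootSum g a = ξ (π.symm a)) → ∀ q, g q ≠ 0 → π.symm q.1.1 < π.symm q.1.2)
    (k : ℕ) : rootCount M (fun a => ξ (π.symm a)) k = rootCount M ξ k := by
  refine Nat.card_congr
    { toFun := fun g => ⟨permRoots π.symm g, ?_, ?_⟩
      invFun := fun f => ⟨permRoots π f, ?_, ?_⟩
      left_inv := fun g => Subtype.ext (permRoots_symm_permRoots (h₂ g g.2.2))
      right_inv := fun f => Subtype.ext ?_ }
  · rw [sum_permRoots (h₂ g g.2.2), g.2.1]
  · exact fun a => (rootSum_permRoots (h₂ g g.2.2) a).trans ((g.2.2 _).trans (by simp))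
  · rw [sum_permRoots (h₁ f f.2.2), f.2.1]
  · exact fun a => (rootSum_permRoots (h₁ f f.2.2) a).trans (f.2.2 _)
  · simpa using permRoots_symm_permRoots (π := π) (h₁ f f.2.2)

end PermRoots

section BlockRotation

variable {c d : ℕ}

def blockRot (c d : ℕ) : Equiv.Perm (Fin (c + d)) :=
  (finCongr (Nat.add_comm c d)).trans finAddFlip

lemma blockRot_val (b : Fin (c + d)) :
    (blockRot c d b : ℕ) = if b.1 < d then b.1 + c else b.1 - d := by
  obtain ⟨b, hb⟩ := b
  split_ifs with h
  · simp [blockRot, finAddFlip_apply_mk_left h, Nat.add_comm]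
  · simp [blockRot, finAddFlip_apply_mk_right (not_lt.1 h)]

lemma blockRot_lt_blockRot {x y : Fin (c + d)} (hxy : x < y) (h : ¬(x.1 < d ∧ d ≤ y.1)) :
    blockRot c d x < blockRot c d y := by
  have hxy : x.1 < y.1 := hxy
  rw [Fin.lt_def, blockRot_val, blockRot_val]
  split_ifs <;> omega

lemma blockRot_symm_lt_blockRot_symm {x y : Fin (c + d)} (hxy : x < y) (h : ¬(x.1 < c ∧ c ≤ y.1)) :
    (blockRot c d).symm x < (blockRot c d).symm y := by
  obtain ⟨x, rfl⟩ := (blockRot c d).surjective x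
  obtain ⟨y, rfl⟩ := (blockRot c d).surjective y
  have hxy : (blockRot c d x).1 < (blockRot c d y).1 := hxy
  simp only [Equiv.symm_apply_apply, Fin.lt_def]
  rw [blockRot_val, blockRot_val] at hxy h
  have := x.2; have := y.2
  split_ifs at hxy h <;> omega

lemma Pseries_comp_blockRot_symm {ξ : Fin (c + d) → ℤ} (h₀ : ∑ a with a.1 < d, ξ a = 0) :
    Pseries (c + d) (fun a => ξ ((blockRot c d).symm a)) = Pseries (c + d) ξ := by
  refine congrArg PowerSeries.mk (funext fun k => congrArg _ (rootCount_comp_symm ?_ ?_ k))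
  · intro f hf q hq
    exact blockRot_lt_blockRot q.2 fun h => hq (eq_zero_of_crossing hf h₀ h.1 h.2)
  · intro g hg q hq
    have h₁ : ∑ a with a.1 < c, ξ ((blockRot c d).symm a) = 0 := by
      have htail : ∑ b with ¬b.1 < d, ξ b = ∑ a with a.1 < c, ξ ((blockRot c d).symm a) := by
        refine sum_equiv (blockRot c d) (fun b => ?_) (fun b _ => by simp)
        simp only [mem_filter, mem_univ, true_and, blockRot_val]
        split_ifs <;> omega
      have hsplit := sum_filter_add_sum_filter_not univ (fun b : Fin (c + d) => b.1 < d) ξ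
      have htotal : ∑ b, ξ b = 0 := by
        rw [← Equiv.sum_comp (blockRot c d).symm]
        exact sum_eq_zero_of_rootSum_eq hg
      rw [h₀, htail, htotal, zero_add] at hsplit
      exact hsplit
    exact blockRot_symm_lt_blockRot_symm q.2 fun h => hq (eq_zero_of_crossing hg h₁ h.1 h.2)

end BlockRotation

lemma Equiv.Perm.mapsTo_compl_of_mapsTo_s8 {α : Type*} [Finite α] (π : Equiv.Perm α) {s : Set α}
    (h : Set.MapsTo π s s) : Set.MapsTo π sᶜ sᶜ :=
  ((s.toFinite.injOn_iff_bijOn_of_mapsTo h).1 π.injective.injOn).surjOn.mapsTo_compl π.injective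

lemma Equiv.Perm.conj_inv_apply {ι : Type*} (ρ σ : Equiv.Perm ι) (b : ι) :
    (ρ * σ * ρ⁻¹)⁻¹ (ρ b) = ρ (σ⁻¹ b) := by
  simp [Equiv.Perm.mul_apply]

lemma sum_filter_lt_comp_perm_lt {M c : ℕ} {v : Fin M → ℤ} {K : ℤ}
    (hv₁ : ∀ a : Fin M, a.1 < c → K ≤ v a) (hv₂ : ∀ a : Fin M, c ≤ a.1 → v a < K)
    {π : Equiv.Perm (Fin M)} (hπ : ¬Set.MapsTo π {a | a.1 < c} {a | a.1 < c}) :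
    ∑ a with a.1 < c, v (π a) < ∑ a with a.1 < c, v a := by
  simp only [Set.MapsTo, Set.mem_ofPred_eq, not_forall, not_lt] at hπ
  obtain ⟨a₀, ha₀, hπa₀⟩ := hπ
  let u : Fin M → ℤ := fun b => if b.1 < c then v b - K else 0
  have hu : ∀ b, 0 ≤ u b := fun b => by
    simp only [u]; split_ifs with h
    · linarith [hv₁ b h]
    · rfl
  calc ∑ a with a.1 < c, v (π a) < ∑ a with a.1 < c, (u (π a) + K) := by
        refine sum_lt_sum (fun a _ => ?_) ⟨a₀, by simpa using ha₀, ?_⟩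
        · simp only [u]; split_ifs with h
          · linarith
          · linarith [hv₂ _ (not_lt.1 h)]
        · simpa [u, not_lt.2 hπa₀] using hv₂ _ hπa₀
    _ ≤ ∑ a, u (π a) + ∑ a : Fin M with a.1 < c, K := by
        rw [sum_add_distrib]
        exact add_le_add_left (sum_le_sum_of_subset_of_nonneg (subset_univ _) fun b _ _ => hu _) _
    _ = ∑ a with a.1 < c, v a := by
        rw [Equiv.sum_comp, ← sum_filter_add_sum_filter_not univ (fun b : Fin M => b.1 < c) u,
          sum_eq_zero (s := filter _ _) fun b hb => if_neg (mem_filter.1 hb).2, add_zero,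
          ← sum_add_distrib]
        exact sum_congr rfl fun b hb => by simp [u, (mem_filter.1 hb).2]

section PlusDelta

variable {M : ℕ}

def plusDelta (M : ℕ) (lam : Fin M → ℕ) (a : Fin M) : ℤ := lam a + delta M a

variable {lam mu : Fin M → ℕ} {c L : ℕ}

lemma le_plusDelta (h : ∀ a : Fin M, a.1 < c → L ≤ lam a) {a : Fin M} (ha : a.1 < c) :
    (L + M - c : ℤ) ≤ plusDelta M lam a := by
  have := h a ha
  simp only [plusDelta, delta]
  omega

lemma plusDelta_lt (h : ∀ a : Fin M, c ≤ a.1 → lam a ≤ L) {a : Fin M} (ha : c ≤ a.1) :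
    plusDelta M lam a < L + M - c := by
  have := h a ha
  simp only [plusDelta, delta]
  omega

lemma sum_filter_lt_plusDelta_eq (hsum : ∑ a with a.1 < c, lam a = ∑ a with a.1 < c, mu a) :
    ∑ a with a.1 < c, plusDelta M lam a = ∑ a with a.1 < c, plusDelta M mu a := by
  have hsumℤ := congrArg (Nat.cast : ℕ → ℤ) hsum
  push_cast at hsumℤ
  simp only [plusDelta, sum_add_distrib, hsumℤ]

noncomputable def kfSummand (M : ℕ) (lam mu : Fin M → ℕ) (σ : Equiv.Perm (Fin M)) :
    PowerSeries ℤ :=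
  ((Equiv.Perm.sign σ : ℤˣ) : ℤ) • Pseries M (fun a => plusDelta M lam (σ⁻¹ a) - plusDelta M mu a)

lemma KostkaFoulkes_eq_sum_kfSummand : KostkaFoulkes M lam mu = ∑ σ, kfSummand M lam mu σ :=
  rfl

lemma kfSummand_eq_zero (h₁ : ∀ a : Fin M, a.1 < c → L ≤ lam a)
    (h₂ : ∀ a : Fin M, c ≤ a.1 → lam a ≤ L)
    (hsum : ∑ a with a.1 < c, lam a = ∑ a with a.1 < c, mu a) {σ : Equiv.Perm (Fin M)}
    (hσ : ¬Set.MapsTo ⇑σ⁻¹ {a | a.1 < c} {a | a.1 < c}) : kfSummand M lam mu σ = 0 := by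
  have hlt := sum_filter_lt_comp_perm_lt (fun a => le_plusDelta h₁) (fun a => plusDelta_lt h₂) hσ
  have hneg : ∑ a with a.1 < c, (plusDelta M lam (σ⁻¹ a) - plusDelta M mu a) < 0 := by
    rw [sum_sub_distrib, ← sum_filter_lt_plusDelta_eq hsum]
    exact sub_neg.2 hlt
  rw [kfSummand, Pseries_eq_zero_of_sum_filter_lt_neg hneg, smul_zero]

end PlusDelta

lemma succ_mul_le_sum_of_antitone {M : ℕ} {α : Fin M → ℕ} (hα : Antitone α) (a : Fin M) :
    (a.1 + 1) * α a ≤ ∑ b, α b :=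
  calc (a.1 + 1) * α a = ∑ _b ∈ Iic a, α a := by simp
    _ ≤ ∑ b ∈ Iic a, α b := sum_le_sum fun b hb => hα (mem_Iic.1 hb)
    _ ≤ ∑ b, α b := sum_le_univ_sum_of_nonneg fun _ => Nat.zero_le _

lemma eq_zero_of_antitone_of_sum_eq {M N : ℕ} {α : Fin M → ℕ} (hα : Antitone α)
    (hsum : ∑ b, α b = N) {a : Fin M} (ha : N ≤ a.1) : α a = 0 := by
  have := succ_mul_le_sum_of_antitone hα a
  rw [hsum] at this
  by_contra h
  nlinarith [Nat.one_le_iff_ne_zero.2 h]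

section Prepend

variable {n N m : ℕ} {α β : Fin (m + N) → ℕ}

lemma prependParts_of_lt {a : Fin (m + N)} (ha : a.1 < m) : prependParts n N m α a = n :=
  dif_pos ha

lemma prependParts_le (hα : ∀ a, α a ≤ n) (a : Fin (m + N)) : prependParts n N m α a ≤ n := by
  unfold prependParts
  split_ifs
  exacts [le_rfl, hα _]

lemma plusDelta_prependParts_blockRot (hα : ∀ a : Fin (m + N), N ≤ a.1 → α a = 0)
    (b : Fin (m + N)) :
    plusDelta (m + N) (prependParts n N m α) (blockRot m N b)
      = plusDelta (m + N) α b + if b.1 < N then -(m : ℤ) else n + N := by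
  have hb := blockRot_val (c := m) (d := N) b
  simp only [plusDelta, delta]
  split_ifs at hb ⊢ with h
  · have : blockRot m N b = ⟨b.1 + m, by omega⟩ := Fin.ext hb
    simp only [this, prependParts, dif_neg (show ¬(b.1 + m < m) by omega), Nat.add_sub_cancel]
    push_cast
    ring
  · rw [prependParts_of_lt (by omega), hα b (not_lt.1 h), hb]
    have := b.2
    push_cast [Nat.cast_sub (not_lt.1 h)]
    ring

lemma not_mapsTo_conj_blockRot {σ : Equiv.Perm (Fin (m + N))}
    (hσ : ¬Set.MapsTo ⇑σ⁻¹ {a | a.1 < N} {a | a.1 < N}) :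
    ¬Set.MapsTo ⇑(blockRot m N * σ * (blockRot m N)⁻¹)⁻¹ {a | a.1 < m} {a | a.1 < m} := by
  intro h
  have hcompl : Set.MapsTo ⇑σ⁻¹ {a | a.1 < N}ᶜ {a | a.1 < N}ᶜ := fun b hb => by
    have hb : ¬b.1 < N := hb
    have hρb : (blockRot m N b).1 < m := by
      have := b.2
      rw [blockRot_val, if_neg hb]
      omega
    have := h hρb
    simp only [Set.mem_ofPred_eq, Equiv.Perm.conj_inv_apply, blockRot_val] at this
    show ¬(σ⁻¹ b).1 < N
    split_ifs at this <;> omega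
  exact hσ (by simpa only [compl_compl] using (σ⁻¹).mapsTo_compl_of_mapsTo_s8 hcompl)

lemma kfSummand_prependParts_conj (hα : ∀ a : Fin (m + N), N ≤ a.1 → α a = 0)
    (hβ : ∀ a : Fin (m + N), N ≤ a.1 → β a = 0)
    (hsum : ∑ a with a.1 < N, α a = ∑ a with a.1 < N, β a) {σ : Equiv.Perm (Fin (m + N))}
    (hσ : Set.MapsTo ⇑σ⁻¹ {a | a.1 < N} {a | a.1 < N}) :
    kfSummand (m + N) (prependParts n N m α) (prependParts n N m β)
      (blockRot m N * σ * (blockRot m N)⁻¹) = kfSummand (m + N) α β σ := by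
  have hσ' : ∀ b, (σ⁻¹ b).1 < N ↔ b.1 < N := fun b =>
    ⟨fun h => by_contra fun hb => (σ⁻¹).mapsTo_compl_of_mapsTo_s8 hσ hb h, fun h => hσ h⟩
  have h₀ : ∑ a with a.1 < N, (plusDelta (m + N) α (σ⁻¹ a) - plusDelta (m + N) β a) = 0 := by
    rw [sum_sub_distrib, ← sum_filter_lt_plusDelta_eq hsum, sub_eq_zero]
    refine sum_equiv σ⁻¹ (fun b => ?_) (fun _ _ => rfl)
    simp only [mem_filter, mem_univ, true_and]
    exact (hσ' b).symm
  have hsign : Equiv.Perm.sign (blockRot m N * σ * (blockRot m N)⁻¹) = Equiv.Perm.sign σ := by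
    rw [map_mul, map_mul, Equiv.Perm.sign_inv, mul_right_comm, Int.units_mul_self, one_mul]
  rw [kfSummand, kfSummand, hsign, ← Pseries_comp_blockRot_symm h₀]
  congr 2
  funext a
  obtain ⟨b, rfl⟩ := (blockRot m N).surjective a
  simp only [Equiv.Perm.conj_inv_apply, Equiv.symm_apply_apply, plusDelta_prependParts_blockRot hα,
    plusDelta_prependParts_blockRot hβ, hσ']
  ring

end Prepend

theorem kostkaFoulkes_prepend_general (n N m : ℕ)
    (α β : Fin (m + N) → ℕ)
    (hα : ∀ a b : Fin (m + N), a ≤ b → α b ≤ α a)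
    (hβ : ∀ a b : Fin (m + N), a ≤ b → β b ≤ β a)
    (hαle : ∀ a, α a ≤ n)
    (hαsum : ∑ a, α a = N) (hβsum : ∑ a, β a = N) :
    KostkaFoulkes (m + N) α β =
      KostkaFoulkes (m + N) (prependParts n N m α) (prependParts n N m β) := by
  have hα₀ : ∀ a : Fin (m + N), N ≤ a.1 → α a = 0 := fun _ =>
    eq_zero_of_antitone_of_sum_eq hα hαsum
  have hβ₀ : ∀ a : Fin (m + N), N ≤ a.1 → β a = 0 := fun _ =>
    eq_zero_of_antitone_of_sum_eq hβ hβsum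
  have hsum : ∑ a with a.1 < N, α a = ∑ a with a.1 < N, β a := by
    rw [sum_filter_of_ne fun a _ h => not_le.1 (mt (hα₀ a) h),
      sum_filter_of_ne fun a _ h => not_le.1 (mt (hβ₀ a) h), hαsum, hβsum]
  have hsum' : ∑ a with a.1 < m, prependParts n N m α a
      = ∑ a with a.1 < m, prependParts n N m β a :=
    sum_congr rfl fun a ha => by simp only [prependParts_of_lt (mem_filter.1 ha).2]
  rw [KostkaFoulkes_eq_sum_kfSummand, KostkaFoulkes_eq_sum_kfSummand]
  refine Fintype.sum_equiv (MulAut.conj (blockRot m N)).toEquiv _ _ fun σ => ?_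
  change _ = kfSummand _ _ _ (blockRot m N * σ * (blockRot m N)⁻¹)
  by_cases hσ : Set.MapsTo ⇑σ⁻¹ {a | a.1 < N} {a | a.1 < N}
  · exact (kfSummand_prependParts_conj hα₀ hβ₀ hsum hσ).symm
  · rw [kfSummand_eq_zero (L := 0) (fun _ _ => Nat.zero_le _) (fun a ha => (hα₀ a ha).le) hsum hσ,
      kfSummand_eq_zero (lam := prependParts n N m α) (L := n)
        (fun _ ha => (prependParts_of_lt ha).ge) (fun a _ => prependParts_le hαle a) hsum'
        (not_mapsTo_conj_blockRot hσ)]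

/-- Let `α`, `β` be partitions of `N` all of whose parts are at most `n` (padded with zeros
to length `m + N`), and let `α″`, `β″` be the partitions of `N + nm` obtained by prepending
`m` parts equal to `n`.  Then `K^{(m+N)}_{α,β}(t) = K^{(m+N)}_{α″,β″}(t)`. -/
theorem kostkaFoulkes_prepend (n N m : ℕ) (hn : 1 ≤ n) (hN : 1 ≤ N)
    (α β : Fin (m + N) → ℕ)
    (hα : ∀ a b : Fin (m + N), a ≤ b → α b ≤ α a)
    (hβ : ∀ a b : Fin (m + N), a ≤ b → β b ≤ β a)
    (hαle : ∀ a, α a ≤ n) (hβle : ∀ a, β a ≤ n)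
    (hαsum : ∑ a, α a = N) (hβsum : ∑ a, β a = N) :
    KostkaFoulkes (m + N) α β =
      KostkaFoulkes (m + N) (prependParts n N m α) (prependParts n N m β) :=
  kostkaFoulkes_prepend_general n N m α β hα hβ hαle hαsum hβsum
end
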